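/- arXiv:1701.00958 — 3 statements merged into one kernel-verified Lean document; each statement's English description precedes it below -/
import Mathlib

section
/- Let S be a finite state space, P_θ a stochastic matrix depending differentiably on a real parameter θ, π_θ its stationary distribution (depending differentiably on θ), f_θ : S → ℝ a differentiable cost function, C(θ) = Σ_s π_θ(s)·f_θ(s) the average cost, and d_θ : S → ℝ a solution of the Bellman equation d_θ(s) = f_θ(s) - C(θ) + Σ_{s'} P_θ(s'|s)·d_θ(s'). Then the policy-gradient formula holds: C'(θ) = Σ_s π_θ(s)·( f_θ'(s) + Σ_{s'} (∂P_θ(s'|s)/∂θ)·d_θ(s') ). -/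
/-!
Differentiating `C = π ⬝ᵥ f` gives `π' ⬝ᵥ f + π ⬝ᵥ f'`, and only the term `π' ⬝ᵥ f` involves the
unknown derivative of the stationary distribution. The Bellman equation writes
`f = d - P d + C • 1`, while differentiating `π P = π` and `∑ π = 1` gives `π' P = π' - π P'` and
`∑ π' = 0`. Substituting, `π' ⬝ᵥ f = π' ⬝ᵥ d - (π' - π P') ⬝ᵥ d = π ⬝ᵥ P' d`.
-/

open Matrix

section Derivatives

variable {𝕜 ι : Type*} [NontriviallyNormedField 𝕜] [Fintype ι]

theorem HasDerivAt.dotProduct {u v : 𝕜 → ι → 𝕜} {u' v' : ι → 𝕜} {x : 𝕜}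
    (hu : ∀ i, HasDerivAt (fun y => u y i) (u' i) x)
    (hv : ∀ i, HasDerivAt (fun y => v y i) (v' i) x) :
    HasDerivAt (fun y => u y ⬝ᵥ v y) (u' ⬝ᵥ v x + u x ⬝ᵥ v') x := by
  simp only [_root_.dotProduct, ← Finset.sum_add_distrib]
  exact HasDerivAt.fun_sum fun i _ => (hu i).mul (hv i)

theorem HasDerivAt.vecMul {κ : Type*} {u : 𝕜 → ι → 𝕜} {M : 𝕜 → Matrix ι κ 𝕜}
    {u' : ι → 𝕜} {M' : Matrix ι κ 𝕜} {x : 𝕜}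
    (hu : ∀ i, HasDerivAt (fun y => u y i) (u' i) x)
    (hM : ∀ i j, HasDerivAt (fun y => M y i j) (M' i j) x) (j : κ) :
    HasDerivAt (fun y => (u y ᵥ* M y) j) ((u' ᵥ* M x + u x ᵥ* M') j) x :=
  HasDerivAt.dotProduct hu fun i => hM i j

theorem sum_eq_zero_of_hasDerivAt_of_sum_eq_const {u : 𝕜 → ι → 𝕜} {u' : ι → 𝕜}
    {x c : 𝕜}
    (hu : ∀ i, HasDerivAt (fun y => u y i) (u' i) x) (hsum : ∀ y, ∑ i, u y i = c) :
    ∑ i, u' i = 0 := by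
  have h : HasDerivAt (fun y => ∑ i, u y i) (∑ i, u' i) x := HasDerivAt.fun_sum fun i _ => hu i
  simp only [hsum] at h
  exact h.unique (hasDerivAt_const x c)

end Derivatives

theorem dotProduct_eq_of_bellman {R ι : Type*} [CommRing R] [Fintype ι]
    {π π' f d : ι → R} {P P' : Matrix ι ι R} {c : R}
    (hsum : ∑ i, π' i = 0) (hbalance : π' ᵥ* P + π ᵥ* P' = π')
    (hbellman : ∀ i, d i = f i - c + (P *ᵥ d) i) :
    π' ⬝ᵥ f = π ⬝ᵥ (P' *ᵥ d) := by
  have hf : f = d - P *ᵥ d + c • 1 := by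
    funext i
    simp only [Pi.add_apply, Pi.sub_apply, Pi.smul_apply, Pi.one_apply, smul_eq_mul, mul_one]
    linear_combination -(hbellman i)
  have hvecMul : π' ᵥ* P = π' - π ᵥ* P' := eq_sub_of_add_eq hbalance
  rw [hf, dotProduct_add, dotProduct_sub, dotProduct_mulVec, hvecMul, dotProduct_smul,
    dotProduct_one, hsum, dotProduct_mulVec, sub_dotProduct, smul_zero, add_zero, sub_sub_cancel]

theorem policy_gradient_formula_general
    {S : Type*} [Fintype S]
    (π π' : ℝ → S → ℝ) (P P' : ℝ → S → S → ℝ) (f f' : ℝ → S → ℝ)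
    (d : ℝ → S → ℝ)
    (hπ : ∀ s θ, HasDerivAt (fun ϑ => π ϑ s) (π' θ s) θ)
    (hP : ∀ s s' θ, HasDerivAt (fun ϑ => P ϑ s s') (P' θ s s') θ)
    (hf : ∀ s θ, HasDerivAt (fun ϑ => f ϑ s) (f' θ s) θ)
    (hbalance : ∀ θ s', ∑ s : S, π θ s * P θ s s' = π θ s')
    (hπsum : ∀ θ, ∑ s : S, π θ s = 1)
    (hBellman : ∀ θ s,
      d θ s = f θ s - (∑ s' : S, π θ s' * f θ s') + ∑ s' : S, P θ s s' * d θ s')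
    (θ : ℝ) :
    HasDerivAt (fun ϑ => ∑ s : S, π ϑ s * f ϑ s)
      (∑ s : S, π θ s * (f' θ s + ∑ s' : S, P' θ s s' * d θ s')) θ := by
  have hπ'sum : ∑ s, π' θ s = 0 :=
    sum_eq_zero_of_hasDerivAt_of_sum_eq_const (fun s => hπ s θ) hπsum
  have hbalance' : π' θ ᵥ* P θ + π θ ᵥ* P' θ = π' θ := by
    funext s'
    refine (HasDerivAt.vecMul (fun s => hπ s θ) (fun s s'' => hP s s'' θ) s').unique ?_
    exact (hπ s' θ).congr_of_eventuallyEq (.of_forall fun ϑ => hbalance ϑ s')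
  have hcost := HasDerivAt.dotProduct (fun s => hπ s θ) (fun s => hf s θ)
  rw [dotProduct_eq_of_bellman hπ'sum hbalance' (hBellman θ), add_comm, ← dotProduct_add]
    at hcost
  exact hcost

theorem policy_gradient_formula
    {S : Type*} [Fintype S] [Nonempty S]
    (π π' : ℝ → S → ℝ) (P P' : ℝ → S → S → ℝ) (f f' : ℝ → S → ℝ)
    (d : ℝ → S → ℝ)
    (hπ : ∀ s θ, HasDerivAt (fun ϑ => π ϑ s) (π' θ s) θ)
    (hP : ∀ s s' θ, HasDerivAt (fun ϑ => P ϑ s s') (P' θ s s') θ)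
    (hf : ∀ s θ, HasDerivAt (fun ϑ => f ϑ s) (f' θ s) θ)
    (hd : ∀ s, Differentiable ℝ (fun ϑ => d ϑ s))
    (hstoch : ∀ θ s, ∑ s' : S, P θ s s' = 1)
    (hbalance : ∀ θ s', ∑ s : S, π θ s * P θ s s' = π θ s')
    (hπsum : ∀ θ, ∑ s : S, π θ s = 1)
    (hBellman : ∀ θ s,
      d θ s = f θ s - (∑ s' : S, π θ s' * f θ s') + ∑ s' : S, P θ s s' * d θ s')
    (θ : ℝ) :
    HasDerivAt (fun ϑ => ∑ s : S, π ϑ s * f ϑ s)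
      (∑ s : S, π θ s * (f' θ s + ∑ s' : S, P' θ s s' * d θ s')) θ :=
  policy_gradient_formula_general π π' P P' f f' d hπ hP hf hbalance hπsum hBellman θ
end

section
/- In the two-agent interdependent-security game with payoff matrix: both protect → u(w₀-c); one protects, other doesn't → protector gets (1-pq)·u(w₀-c) + pq·u(w₀-c-l), non-protector gets (1-p)·u(w₀) + p·u(w₀-l); neither protects → each gets p·u(w₀-l) + (1-p)·(pq·u(w₀-l) + (1-pq)·u(w₀)). For a risk-neutral agent (u = identity), if the protection cost satisfies c ≤ c₂ := p(1-pq)·l, then (Protect, Protect) is a Nash equilibrium: given the other agent protects, protecting yields payoff at least as large as not protecting. -/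
theorem ids_protect_protect_nash
    (w₀ l c p q : ℝ) (hl : 0 < l) (hc : 0 ≤ c)
    (hp0 : 0 ≤ p) (hp1 : p ≤ 1) (hq0 : 0 ≤ q) (hq1 : q ≤ 1)
    (hthr : c ≤ p * (1 - p * q) * l) :
    w₀ - c ≥ (1 - p) * w₀ + p * (w₀ - l) := by
  nlinarith [mul_nonneg (mul_nonneg hp0 hq0) (mul_nonneg hp0 hl.le)]
end

section
/- In the same risk-neutral two-agent IDS game, if c > c₁ := p·l, then (No-protection, No-protection) is a Nash equilibrium: given the other agent does not protect, not protecting yields strictly higher expected payoff than protecting. Specifically, [(1-pq)·(w₀-c) + pq·(w₀-c-l)] < [p·(w₀-l) + (1-p)·(pq·(w₀-l) + (1-pq)·w₀)] whenever c > p·(1-pq)·l, which holds since c > p·l ≥ p(1-pq)·l. -/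
theorem ids_noprotect_noprotect_nash
    (w₀ l c p q : ℝ) (hl : 0 < l)
    (hp0 : 0 < p) (hp1 : p ≤ 1) (hq0 : 0 ≤ q) (hq1 : q ≤ 1)
    (hthr : c > p * l) :
    (1 - p * q) * (w₀ - c) + p * q * (w₀ - c - l)
      < p * (w₀ - l) + (1 - p) * (p * q * (w₀ - l) + (1 - p * q) * w₀) := by
  nlinarith [mul_nonneg hp0.le hq0, mul_nonneg (mul_nonneg hp0.le hp0.le) (mul_nonneg hq0 hl.le)]
end
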